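/- arXiv:1606.08349 — 2 statements merged into one kernel-verified Lean document; each statement's English description precedes it below -/
import Mathlib

section
/- Let A be a Banach algebra and φ ∈ Δ(A) a character such that the closed linear span of A·ker φ equals ker φ. If the second dual A** (with an Arens product) is approximately biflat, then A is left φ-amenable. -/
set_option synthInstance.maxHeartbeats 1000000
set_option maxHeartbeats 4000000
set_option maxSynthPendingDepth 3
set_option linter.unusedSectionVars false
set_option linter.unusedVariables false
open scoped Topology
open Filter ContinuousLinearMap

noncomputable section

namespace ApproxBiflat

variable (A : Type*) [NonUnitalNormedRing A] [NormedSpace ℂ A]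
  [IsScalarTower ℂ A A] [SMulCommClass ℂ A A]

/-- The dual space `A*` of a Banach algebra `A`. -/
abbrev Dual' := A →L[ℂ] ℂ

/-- Bounded bilinear forms on `A × A`; this is the canonical isometric model of the dual
`(A ⊗_p A)*` of the projective tensor product `A ⊗_p A`. -/
abbrev BilForm := A →L[ℂ] A →L[ℂ] ℂ

/-- The canonical model of the second dual `(A ⊗_p A)**` of the projective tensor product. -/
abbrev TensorBidual := (A →L[ℂ] A →L[ℂ] ℂ) →L[ℂ] ℂ

/-- The bidual of a Banach algebra, as a Banach space. -/
abbrev Bidual := (A →L[ℂ] ℂ) →L[ℂ] ℂ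

variable {A}

/-- The left action of `A` on `A* = (A →L ℂ)`: `(a · f) x = f (x * a)`. -/
def dualLeft (a : A) : Dual' A →L[ℂ] Dual' A :=
  (compL ℂ A A ℂ).flip ((ContinuousLinearMap.mul ℂ A).flip a)

/-- The right action of `A` on `A*`: `(f · a) x = f (a * x)`. -/
def dualRight (a : A) : Dual' A →L[ℂ] Dual' A :=
  (compL ℂ A A ℂ).flip (ContinuousLinearMap.mul ℂ A a)

@[simp] lemma dualLeft_apply (a : A) (f : Dual' A) (x : A) : dualLeft a f x = f (x * a) := rfl
@[simp] lemma dualRight_apply (a : A) (f : Dual' A) (x : A) : dualRight a f x = f (a * x) := rfl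

/-- The adjoint `π* : A* → (A ⊗_p A)*` of the multiplication map
`π : A ⊗_p A → A`, in the bilinear-form model: `(π* f) a b = f (a * b)`. -/
def piStar : Dual' A →L[ℂ] BilForm A :=
  ((compL ℂ A (A →L[ℂ] A) (A →L[ℂ] ℂ)).flip (ContinuousLinearMap.mul ℂ A)).comp
    (compL ℂ A A ℂ)

@[simp] lemma piStar_apply (f : Dual' A) (a b : A) : piStar f a b = f (a * b) := rfl

/-- The left action of `A` on `(A ⊗_p A)*`: `(a · T) b c = T b (c * a)`. -/
def bilLeft (a : A) : BilForm A →L[ℂ] BilForm A :=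
  compL ℂ A (A →L[ℂ] ℂ) (A →L[ℂ] ℂ) (dualLeft a)

/-- The right action of `A` on `(A ⊗_p A)*`: `(T · a) b c = T (a * b) c`. -/
def bilRight (a : A) : BilForm A →L[ℂ] BilForm A :=
  (compL ℂ A A (A →L[ℂ] ℂ)).flip (ContinuousLinearMap.mul ℂ A a)

@[simp] lemma bilLeft_apply (a : A) (T : BilForm A) (b c : A) :
    bilLeft a T b c = T b (c * a) := rfl
@[simp] lemma bilRight_apply (a : A) (T : BilForm A) (b c : A) :
    bilRight a T b c = T (a * b) c := rfl

/-- The left action of `A` on `(A ⊗_p A)**`: `a · m = m ∘ (T ↦ T · a)`. -/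
def tbLeft (a : A) (m : TensorBidual A) : TensorBidual A := m.comp (bilRight a)

/-- The right action of `A` on `(A ⊗_p A)**`: `m · a = m ∘ (T ↦ a · T)`. -/
def tbRight (m : TensorBidual A) (a : A) : TensorBidual A := m.comp (bilLeft a)

/-- The elementary tensor `a ⊗ b`, viewed canonically inside `(A ⊗_p A)**`. -/
def dyad (a b : A) : TensorBidual A :=
  (ContinuousLinearMap.apply ℂ ℂ b).comp (ContinuousLinearMap.apply ℂ (A →L[ℂ] ℂ) a)

@[simp] lemma dyad_apply (a b : A) (T : BilForm A) : dyad a b T = T a b := rfl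

variable (A) in
/-- The canonical isometric image of the projective tensor product `A ⊗_p A` inside its bidual
`(A ⊗_p A)**`: the closure of the linear span of the elementary tensors. -/
def tensorSpan : Submodule ℂ (TensorBidual A) :=
  (Submodule.span ℂ {m : TensorBidual A | ∃ a b : A, m = dyad a b}).topologicalClosure

/-- The double adjoint `π** : (A ⊗_p A)** → A**` of the multiplication map. -/
def piStarStar (m : TensorBidual A) : Bidual A := m.comp piStar

/-- `ρ : (A ⊗_p A)* → A*` is a morphism of Banach `A`-bimodules. -/
def IsBimodMorphism (ρ : BilForm A →L[ℂ] Dual' A) : Prop :=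
  ∀ (a : A) (T : BilForm A),
    ρ (bilLeft a T) = dualLeft a (ρ T) ∧ ρ (bilRight a T) = dualRight a (ρ T)

variable (A)

/-- A Banach algebra `A` is **biflat** if there is a bounded `A`-bimodule morphism
`ρ : (A ⊗_p A)* → A*` with `ρ ∘ π* = id`. -/
def Biflat : Prop :=
  ∃ ρ : BilForm A →L[ℂ] Dual' A, IsBimodMorphism ρ ∧ ∀ f : Dual' A, ρ (piStar f) = f

/-- A Banach algebra `A` is **approximately biflat** if there is a net `(ρ_α)` of bounded
`A`-bimodule morphisms `(A ⊗_p A)* → A*` with `ρ_α ∘ π* → id_{A*}` in the weak-star operator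
topology.  (Nets are encoded by filters in the standard way.) -/
def ApproximatelyBiflat : Prop :=
  ∃ l : Filter (BilForm A →L[ℂ] Dual' A), l.NeBot ∧
    (∀ᶠ ρ in l, IsBimodMorphism ρ) ∧
    ∀ (f : Dual' A) (a : A), Tendsto (fun ρ => ρ (piStar f) a) l (𝓝 (f a))

/-- A Banach algebra `A` is **pseudo-amenable** if there is a net `(m_α)` in `A ⊗_p A`
(realized isometrically inside `(A ⊗_p A)**` as `tensorSpan A`) such that
`a · m_α - m_α · a → 0` and `π(m_α) a → a` for every `a ∈ A`. -/
def PseudoAmenable : Prop :=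
  ∃ l : Filter (TensorBidual A), l.NeBot ∧
    (∀ᶠ m in l, m ∈ tensorSpan A) ∧
    (∀ a : A, Tendsto (fun m => tbLeft a m - tbRight m a) l (𝓝 0)) ∧
    ∀ a : A, Tendsto (fun m => (piStarStar m).comp (dualLeft a)) l
      (𝓝 (NormedSpace.inclusionInDoubleDual ℂ A a))

/-- `A` has a (two-sided, not necessarily bounded) approximate identity. -/
def HasApproximateIdentity : Prop :=
  ∃ l : Filter A, l.NeBot ∧
    ∀ a : A, Tendsto (fun e => a * e) l (𝓝 a) ∧ Tendsto (fun e => e * a) l (𝓝 a)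

end ApproxBiflat
namespace ApproxBiflat

section Arens

variable {A : Type*} [NonUnitalNormedRing A] [NormedSpace ℂ A]
  [IsScalarTower ℂ A A] [SMulCommClass ℂ A A]

/-- The auxiliary map of the first Arens product: for `G ∈ A**`,
`arensAux G : A* → A*` is `f ↦ G ⋄ f`, where `(G ⋄ f) (a) = G (f · a)` and `(f · a) b = f (a b)`. -/
def arensAux (G : Bidual A) : Dual' A →L[ℂ] Dual' A :=
  (compL ℂ A (A →L[ℂ] ℂ) ℂ G).comp piStar

@[simp] lemma arensAux_apply (G : Bidual A) (f : Dual' A) (a : A) :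
    arensAux G f a = G (piStar f a) := rfl

/-- The first Arens product on the bidual `A**`: `(F □ G) (f) = F (G ⋄ f)`. -/
instance : Mul (Bidual A) := ⟨fun F G => F.comp (arensAux G)⟩

lemma arens_mul_apply (F G : Bidual A) (f : Dual' A) : (F * G) f = F (arensAux G f) := rfl

private lemma arensAux_add (G H : Bidual A) : arensAux (G + H) = arensAux G + arensAux H := by
  ext f a; simp

private lemma arensAux_smul (c : ℂ) (G : Bidual A) : arensAux (c • G) = c • arensAux G := by
  ext f a; simp

private lemma piStar_mul' (f : Dual' A) (a b : A) :
    piStar f (a * b) = piStar (piStar f a) b := by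
  ext c; simp [mul_assoc]

noncomputable instance : NonUnitalRing (Bidual A) :=
  { (inferInstance : AddCommGroup (Bidual A)) with
    mul := (· * ·)
    left_distrib := fun F G H => by
      ext f; simp [arens_mul_apply, arensAux_add]
    right_distrib := fun F G H => by
      ext f; simp [arens_mul_apply]
    zero_mul := fun F => by ext f; simp [arens_mul_apply]
    mul_zero := fun F => by
      ext f
      have : arensAux (0 : Bidual A) = 0 := by ext g a; simp
      simp [arens_mul_apply, this]
    mul_assoc := fun F G H => by
      ext f
      have key : arensAux G (arensAux H f) = arensAux (G * H) f := by
        ext a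
        have : piStar (arensAux H f) a = arensAux H (piStar f a) := by
          ext b; simp [piStar_mul']
        simp [this, arens_mul_apply]
      simp [arens_mul_apply, key] }

private lemma norm_piStar_app_le (f : Dual' A) (a : A) : ‖piStar f a‖ ≤ ‖f‖ * ‖a‖ := by
  refine ContinuousLinearMap.opNorm_le_bound _ (by positivity) fun b => ?_
  calc ‖f (a * b)‖ ≤ ‖f‖ * ‖a * b‖ := f.le_opNorm _
    _ ≤ ‖f‖ * (‖a‖ * ‖b‖) := by
        have := norm_mul_le a b
        have h0 : (0:ℝ) ≤ ‖f‖ := norm_nonneg _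
        nlinarith
    _ = ‖f‖ * ‖a‖ * ‖b‖ := by ring

private lemma norm_piStar_le' (f : Dual' A) : ‖piStar (A := A) f‖ ≤ ‖f‖ := by
  refine ContinuousLinearMap.opNorm_le_bound _ (norm_nonneg f) fun a => norm_piStar_app_le f a

private lemma norm_arensAux_le (G : Bidual A) : ‖arensAux G‖ ≤ ‖G‖ := by
  refine ContinuousLinearMap.opNorm_le_bound _ (norm_nonneg G) fun f => ?_
  have h1 : ‖arensAux G f‖ ≤ ‖G‖ * ‖piStar (A := A) f‖ := by
    exact ContinuousLinearMap.opNorm_comp_le G (piStar (A := A) f)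
  calc ‖arensAux G f‖ ≤ ‖G‖ * ‖piStar (A := A) f‖ := h1
    _ ≤ ‖G‖ * ‖f‖ := by
        have := norm_piStar_le' f
        have h0 : (0:ℝ) ≤ ‖G‖ := norm_nonneg _
        nlinarith

noncomputable instance : NonUnitalNormedRing (Bidual A) :=
  { (inferInstance : NormedAddCommGroup (Bidual A)),
    (inferInstance : NonUnitalRing (Bidual A)) with
    norm_mul_le := fun F G => by
      calc ‖F * G‖ ≤ ‖F‖ * ‖arensAux G‖ := ContinuousLinearMap.opNorm_comp_le _ _
        _ ≤ ‖F‖ * ‖G‖ := by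
            have := norm_arensAux_le G
            have h0 : (0:ℝ) ≤ ‖F‖ := norm_nonneg _
            nlinarith }

instance : IsScalarTower ℂ (Bidual A) (Bidual A) :=
  ⟨fun c F G => by
    show (c • F) * G = c • (F * G)
    ext f; simp [arens_mul_apply]⟩

instance : SMulCommClass ℂ (Bidual A) (Bidual A) :=
  ⟨fun c F G => by
    show c • (F * G) = F * (c • G)
    ext f; simp [arens_mul_apply, arensAux_smul]⟩

end Arens

end ApproxBiflat
namespace ApproxBiflat

section Characters

variable {A : Type*} [NonUnitalNormedRing A] [NormedSpace ℂ A]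
  [IsScalarTower ℂ A A] [SMulCommClass ℂ A A]

/-- A character on a Banach algebra: a non-zero multiplicative linear functional.
(Multiplicative linear functionals on Banach algebras are automatically continuous.) -/
def IsCharacter (φ : A →L[ℂ] ℂ) : Prop :=
  φ ≠ 0 ∧ ∀ a b : A, φ (a * b) = φ a * φ b

/-- `A` is approximately `φ`-inner amenable: there is a net `(a_α)` in `A` with
`a • a_α - a_α • a → 0` and `φ(a_α) → 1` for all `a ∈ A`. -/
def ApproximatelyPhiInnerAmenable (φ : A →L[ℂ] ℂ) : Prop :=
  ∃ l : Filter A, l.NeBot ∧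
    (∀ a : A, Filter.Tendsto (fun u => a * u - u * a) l (𝓝 0)) ∧
    Filter.Tendsto (fun u => φ u) l (𝓝 1)

/-- `A` is approximately left `φ`-amenable: there is a net `(m_α)` in `A` with
`a m_α - φ(a) m_α → 0` and `φ(m_α) → 1` for all `a ∈ A`. -/
def ApproximatelyLeftPhiAmenable (φ : A →L[ℂ] ℂ) : Prop :=
  ∃ l : Filter A, l.NeBot ∧
    (∀ a : A, Filter.Tendsto (fun u => a * u - φ a • u) l (𝓝 0)) ∧
    Filter.Tendsto (fun u => φ u) l (𝓝 1)

/-- `A` is left `φ`-amenable: there is `m ∈ A**` with `a · m = φ(a) m` for all `a ∈ A` and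
`φ̃(m) = 1`, where `φ̃` is the canonical extension of `φ` to `A**` and `a · m` is the canonical
left `A`-module action on `A** = (A*)*`, i.e. `(a · m)(f) = m (f · a)`. -/
def LeftPhiAmenable (φ : A →L[ℂ] ℂ) : Prop :=
  ∃ m : Bidual A, (∀ a : A, m.comp (dualRight a) = φ a • m) ∧ m φ = 1

end Characters

end ApproxBiflat
namespace ApproxBiflat

/-! Extend `φ` to the character `φ̃ F = F φ` of `A**`, take `u` with `φ u = 1`, and use
approximate biflatness to pick a bimodule morphism `ρ : (A** ⊗_p A**)* → (A**)*` with
`ρ (π* φ̃) u ≠ 0`. Put `m f = ρ (f̃ ⊗ φ̃) u`. Since `k · (f̃ ⊗ φ̃) = φ̃ k (f̃ ⊗ φ̃)`, the functional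
`ρ (f̃ ⊗ φ̃)` restricted to `A` kills `A · ker φ`, hence its closed span `ker φ`, so it equals
`φ (·) m f`. Combined with `(f̃ ⊗ φ̃) · a = (f · a)~ ⊗ φ̃` this gives `m (f · a) = φ a m f`, and
`m φ = ρ (π* φ̃) u ≠ 0`; normalising `m` proves left `φ`-amenability. -/

section

variable {A : Type*} [NonUnitalNormedRing A] [NormedSpace ℂ A]
  [IsScalarTower ℂ A A] [SMulCommClass ℂ A A] {φ : Dual' A}

lemma IsCharacter.exists_apply_eq_one (hφ : IsCharacter φ) : ∃ u : A, φ u = 1 := by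
  obtain ⟨x, hx⟩ : ∃ x : A, φ x ≠ 0 := by
    by_contra! h
    exact hφ.1 (ContinuousLinearMap.ext h)
  exact ⟨(φ x)⁻¹ • x, by simp [hx]⟩

def incl : A →L[ℂ] Bidual A := apply ℂ ℂ

@[simp] lemma incl_apply (a : A) (f : Dual' A) : incl a f = f a := rfl

lemma incl_mul (a b : A) : incl (a * b) = incl a * incl b := rfl

def charExt (φ : Dual' A) : Dual' (Bidual A) := apply ℂ ℂ φ

@[simp] lemma charExt_apply (F : Bidual A) : charExt φ F = F φ := rfl

/-- `f ↦ f̃ ⊗ φ̃`, with values in `(A** ⊗_p A**)*`. -/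
def tensorCharExt (φ : Dual' A) : Dual' A →L[ℂ] BilForm (Bidual A) :=
  ((smulRightL ℂ (Bidual A) (Dual' (Bidual A))).flip (charExt φ)).comp (apply ℂ ℂ)

@[simp] lemma tensorCharExt_apply (f : Dual' A) (F G : Bidual A) :
    tensorCharExt φ f F G = F f * G φ := rfl

lemma bilRight_incl_tensorCharExt (a : A) (f : Dual' A) :
    bilRight (incl a) (tensorCharExt φ f) = tensorCharExt φ (dualRight a f) := rfl

variable (hφ : ∀ a b : A, φ (a * b) = φ a * φ b)
include hφ

lemma piStar_of_mul (a : A) : piStar φ a = φ a • φ := by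
  ext b; simp [hφ]

lemma arensAux_of_mul (G : Bidual A) : arensAux G φ = G φ • φ := by
  ext a; simp [piStar_of_mul hφ, mul_comm]

lemma arens_mul_apply_of_mul (F G : Bidual A) : (F * G) φ = G φ * F φ := by
  simp [arens_mul_apply, arensAux_of_mul hφ, mul_comm]

lemma bilLeft_tensorCharExt (H : Bidual A) (f : Dual' A) :
    bilLeft H (tensorCharExt φ f) = H φ • tensorCharExt φ f := by
  ext F G
  simp [arens_mul_apply_of_mul hφ, mul_left_comm]

lemma tensorCharExt_self : tensorCharExt φ φ = piStar (charExt φ) := by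
  ext F G
  simp [arens_mul_apply_of_mul hφ, mul_comm]

end

section

variable {A : Type*} [NonUnitalNormedRing A] [NormedSpace ℂ A]
  [IsScalarTower ℂ A A] [SMulCommClass ℂ A A] {φ : Dual' A}
  (hker : (Submodule.span ℂ {x : A | ∃ a k : A, φ k = 0 ∧ x = a * k}).topologicalClosure =
    LinearMap.ker (φ : A →ₗ[ℂ] ℂ))
  {ρ : BilForm (Bidual A) →L[ℂ] Dual' (Bidual A)}

include hker in
lemma apply_eq_zero_of_apply_mul_eq_zero {q : Dual' A}
    (hq : ∀ a k : A, φ k = 0 → q (a * k) = 0) {y : A} (hy : φ y = 0) : q y = 0 := by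
  have hspan : Submodule.span ℂ {x : A | ∃ a k : A, φ k = 0 ∧ x = a * k} ≤
      LinearMap.ker (q : A →ₗ[ℂ] ℂ) := by
    rw [Submodule.span_le]
    rintro _ ⟨a, k, hk, rfl⟩
    exact hq a k hk
  have hclosed := Submodule.topologicalClosure_minimal _ hspan q.isClosed_ker
  rw [hker] at hclosed
  exact hclosed hy

lemma IsBimodMorphism.apply_tensorCharExt_incl_mul (hρ : IsBimodMorphism ρ)
    (hφ : ∀ a b : A, φ (a * b) = φ a * φ b) (f : Dual' A) (a : A) {k : A} (hk : φ k = 0) :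
    ρ (tensorCharExt φ f) (incl (a * k)) = 0 := by
  have h := congrArg (· (incl a)) (hρ (incl k) (tensorCharExt φ f)).1
  simpa [bilLeft_tensorCharExt hφ, hk, incl_mul] using h.symm

include hker in
lemma IsBimodMorphism.apply_tensorCharExt_incl (hρ : IsBimodMorphism ρ)
    (hφ : ∀ a b : A, φ (a * b) = φ a * φ b) {u : A} (hu : φ u = 1) (f : Dual' A) (a : A) :
    ρ (tensorCharExt φ f) (incl a) = φ a * ρ (tensorCharExt φ f) (incl u) := by
  have h := apply_eq_zero_of_apply_mul_eq_zero hker (q := (ρ (tensorCharExt φ f)).comp incl)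
    (fun b k hk => hρ.apply_tensorCharExt_incl_mul hφ f b hk) (y := a - φ a • u)
    (by simp [hu])
  simpa [sub_eq_zero] using h

def evalTensorCharExt (ρ : BilForm (Bidual A) →L[ℂ] Dual' (Bidual A)) (φ : Dual' A) (u : A) :
    Bidual A :=
  (apply ℂ ℂ (incl u)).comp (ρ.comp (tensorCharExt φ))

@[simp] lemma evalTensorCharExt_apply (u : A) (f : Dual' A) :
    evalTensorCharExt ρ φ u f = ρ (tensorCharExt φ f) (incl u) := rfl

include hker in
lemma IsBimodMorphism.evalTensorCharExt_comp_dualRight (hρ : IsBimodMorphism ρ)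
    (hφ : ∀ a b : A, φ (a * b) = φ a * φ b) {u : A} (hu : φ u = 1) (a : A) :
    (evalTensorCharExt ρ φ u).comp (dualRight a) = φ a • evalTensorCharExt ρ φ u := by
  ext f
  have hright := congrArg (· (incl u)) (hρ (incl a) (tensorCharExt φ f)).2
  simp only [bilRight_incl_tensorCharExt, dualRight_apply, ← incl_mul] at hright
  simp [hright, hρ.apply_tensorCharExt_incl hker hφ hu f (a * u), hφ, hu]

end

lemma leftPhiAmenable_of_comp_dualRight {A : Type*} [NonUnitalNormedRing A] [NormedSpace ℂ A]
    [IsScalarTower ℂ A A] [SMulCommClass ℂ A A] {φ : A →L[ℂ] ℂ} {m : Bidual A}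
    (hm : ∀ a : A, m.comp (dualRight a) = φ a • m) (hmφ : m φ ≠ 0) : LeftPhiAmenable φ :=
  ⟨(m φ)⁻¹ • m, fun a => by rw [smul_comp, hm, smul_comm], by simp [hmφ]⟩

theorem statement4_general (A : Type*) [NonUnitalNormedRing A] [NormedSpace ℂ A]
    [IsScalarTower ℂ A A] [SMulCommClass ℂ A A]
    (φ : A →L[ℂ] ℂ) (hφ : IsCharacter φ)
    (hker : (Submodule.span ℂ {x : A | ∃ a k : A, φ k = 0 ∧ x = a * k}).topologicalClosure =
      LinearMap.ker (φ : A →ₗ[ℂ] ℂ))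
    (hbiflat : ApproximatelyBiflat (Bidual A)) :
    LeftPhiAmenable φ := by
  obtain ⟨u, hu⟩ := hφ.exists_apply_eq_one
  obtain ⟨l, hl, hbimod, hlim⟩ := hbiflat
  have hconv : Tendsto (fun ρ => ρ (piStar (charExt φ)) (incl u)) l (𝓝 1) := by
    simpa [hu] using hlim (charExt φ) (incl u)
  obtain ⟨ρ, hρ, hρu⟩ := (hbimod.and (hconv.eventually_ne one_ne_zero)).exists
  refine leftPhiAmenable_of_comp_dualRight (m := evalTensorCharExt ρ φ u)
    (hρ.evalTensorCharExt_comp_dualRight hker hφ.2 hu) ?_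
  rwa [evalTensorCharExt_apply, tensorCharExt_self hφ.2]

/-- Let `A` be a Banach algebra and `φ ∈ Δ(A)` a character such that the
closed linear span of `A · ker φ` equals `ker φ`.  If the second dual `A**` (with the first
Arens product) is approximately biflat, then `A` is left `φ`-amenable. -/
theorem statement4 (A : Type*) [NonUnitalNormedRing A] [NormedSpace ℂ A]
    [IsScalarTower ℂ A A] [SMulCommClass ℂ A A] [CompleteSpace A]
    (φ : A →L[ℂ] ℂ) (hφ : IsCharacter φ)
    (hker : (Submodule.span ℂ {x : A | ∃ a k : A, φ k = 0 ∧ x = a * k}).topologicalClosure =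
      LinearMap.ker (φ : A →ₗ[ℂ] ℂ))
    (hbiflat : ApproximatelyBiflat (Bidual A)) :
    LeftPhiAmenable φ :=
  statement4_general A φ hφ hker hbiflat

end ApproxBiflat
end
end

section
/- Let A, B be Banach algebras, X a Banach A,B-module, φ ∈ Δ(B), and ψ_φ ∈ Δ(Tri(A,X,B)) the character ψ_φ([[a,x],[0,b]]) = φ(b). If the closed ideal I = Tri(0,X,B) of T = Tri(A,X,B) is left ψ_φ|_I-amenable, then there is a bounded net (x_α) in X and (b_α) in B with φ(b_α) = 1, x·b_α − φ(b)·x_α → 0 and b·b_α − φ(b)·b_α → 0 for all x ∈ X and b ∈ B. -/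
set_option synthInstance.maxHeartbeats 1000000
set_option maxHeartbeats 4000000
set_option maxSynthPendingDepth 3
set_option linter.unusedSectionVars false
set_option linter.unusedVariables false
open scoped Topology
open Filter ContinuousLinearMap

noncomputable section

namespace ApproxBiflat

/-- A Banach `A, B`-module `X`: a Banach space with a contractive left `A`-action and a
contractive right `B`-action that commute. -/
class BanachBimodule (A B X : Type*)
    [NonUnitalNormedRing A] [NormedSpace ℂ A]
    [NonUnitalNormedRing B] [NormedSpace ℂ B]
    [NormedAddCommGroup X] [NormedSpace ℂ X] where
  lsmul : A →L[ℂ] X →L[ℂ] X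
  rsmul : B →L[ℂ] X →L[ℂ] X
  lsmul_mul : ∀ (a a' : A) (x : X), lsmul (a * a') x = lsmul a (lsmul a' x)
  rsmul_mul : ∀ (b b' : B) (x : X), rsmul (b * b') x = rsmul b' (rsmul b x)
  lsmul_rsmul : ∀ (a : A) (b : B) (x : X), lsmul a (rsmul b x) = rsmul b (lsmul a x)
  norm_lsmul_le : ∀ (a : A) (x : X), ‖lsmul a x‖ ≤ ‖a‖ * ‖x‖
  norm_rsmul_le : ∀ (b : B) (x : X), ‖rsmul b x‖ ≤ ‖b‖ * ‖x‖

section BimodAbbrev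

variable (A B X : Type*)
  [NonUnitalNormedRing A] [NormedSpace ℂ A]
  [NonUnitalNormedRing B] [NormedSpace ℂ B]
  [NormedAddCommGroup X] [NormedSpace ℂ X] [BanachBimodule A B X]

/-- The left action of `A` on the Banach `A,B`-module `X`. -/
noncomputable def lAct : A →L[ℂ] X →L[ℂ] X := BanachBimodule.lsmul B

/-- The right action of `B` on the Banach `A,B`-module `X`. -/
noncomputable def rAct : B →L[ℂ] X →L[ℂ] X := BanachBimodule.rsmul A

end BimodAbbrev

/-- The triangular Banach algebra `Tri(A, X, B)` of matrices `[[a, x], [0, b]]`,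
with norm `‖a‖ + ‖x‖ + ‖b‖`. -/
@[ext]
structure Tri (A X B : Type*) where
  a : A
  x : X
  b : B

namespace Tri

variable {A B X : Type*}
  [NonUnitalNormedRing A] [NormedSpace ℂ A] [IsScalarTower ℂ A A] [SMulCommClass ℂ A A]
  [NonUnitalNormedRing B] [NormedSpace ℂ B] [IsScalarTower ℂ B B] [SMulCommClass ℂ B B]
  [NormedAddCommGroup X] [NormedSpace ℂ X]

instance : Add (Tri A X B) := ⟨fun s t => ⟨s.a + t.a, s.x + t.x, s.b + t.b⟩⟩
instance : Zero (Tri A X B) := ⟨⟨0, 0, 0⟩⟩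
instance : Neg (Tri A X B) := ⟨fun t => ⟨-t.a, -t.x, -t.b⟩⟩
instance : SMul ℂ (Tri A X B) := ⟨fun c t => ⟨c • t.a, c • t.x, c • t.b⟩⟩

@[simp] lemma add_a (s t : Tri A X B) : (s + t).a = s.a + t.a := rfl
@[simp] lemma add_x (s t : Tri A X B) : (s + t).x = s.x + t.x := rfl
@[simp] lemma add_b (s t : Tri A X B) : (s + t).b = s.b + t.b := rfl
@[simp] lemma zero_a : (0 : Tri A X B).a = 0 := rfl
@[simp] lemma zero_x : (0 : Tri A X B).x = 0 := rfl
@[simp] lemma zero_b : (0 : Tri A X B).b = 0 := rfl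
@[simp] lemma neg_a (t : Tri A X B) : (-t).a = -t.a := rfl
@[simp] lemma neg_x (t : Tri A X B) : (-t).x = -t.x := rfl
@[simp] lemma neg_b (t : Tri A X B) : (-t).b = -t.b := rfl
@[simp] lemma smul_a (c : ℂ) (t : Tri A X B) : (c • t).a = c • t.a := rfl
@[simp] lemma smul_x (c : ℂ) (t : Tri A X B) : (c • t).x = c • t.x := rfl
@[simp] lemma smul_b (c : ℂ) (t : Tri A X B) : (c • t).b = c • t.b := rfl

instance : AddCommGroup (Tri A X B) where
  add_assoc s t u := by ext <;> simp [add_assoc]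
  zero_add t := by ext <;> simp
  add_zero t := by ext <;> simp
  neg_add_cancel t := by ext <;> simp
  add_comm s t := by ext <;> simp [add_comm]
  nsmul := nsmulRec
  zsmul := zsmulRec

instance : Module ℂ (Tri A X B) where
  one_smul t := by ext <;> simp
  mul_smul c d t := by ext <;> simp [mul_smul]
  smul_zero c := by ext <;> simp
  smul_add c s t := by ext <;> simp
  add_smul c d t := by ext <;> simp [add_smul]
  zero_smul t := by ext <;> simp

noncomputable instance : NormedAddCommGroup (Tri A X B) :=
  AddGroupNorm.toNormedAddCommGroup
    { toFun := fun t => ‖t.a‖ + ‖t.x‖ + ‖t.b‖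
      map_zero' := by simp
      add_le' := fun s t => by
        have h1 := norm_add_le s.a t.a
        have h2 := norm_add_le s.x t.x
        have h3 := norm_add_le s.b t.b
        simp only [add_a, add_x, add_b]
        linarith
      neg' := fun t => by simp
      eq_zero_of_map_eq_zero' := fun t h => by
        have h' : ‖t.a‖ + ‖t.x‖ + ‖t.b‖ = 0 := h
        have h1 : ‖t.a‖ = 0 := by
          nlinarith [norm_nonneg t.a, norm_nonneg t.x, norm_nonneg t.b]
        have h2 : ‖t.x‖ = 0 := by
          nlinarith [norm_nonneg t.a, norm_nonneg t.x, norm_nonneg t.b]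
        have h3 : ‖t.b‖ = 0 := by
          nlinarith [norm_nonneg t.a, norm_nonneg t.x, norm_nonneg t.b]
        ext
        · exact norm_eq_zero.1 h1
        · exact norm_eq_zero.1 h2
        · exact norm_eq_zero.1 h3 }

lemma norm_def (t : Tri A X B) : ‖t‖ = ‖t.a‖ + ‖t.x‖ + ‖t.b‖ := rfl

noncomputable instance : NormedSpace ℂ (Tri A X B) where
  norm_smul_le c t := by
    rw [norm_def, norm_def]
    simp only [smul_a, smul_x, smul_b, norm_smul]
    exact le_of_eq (by ring)

section Mul

variable [BanachBimodule A B X]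

instance : Mul (Tri A X B) :=
  ⟨fun s t => ⟨s.a * t.a, lAct A B X s.a t.x + rAct A B X t.b s.x, s.b * t.b⟩⟩

@[simp] lemma mul_a (s t : Tri A X B) : (s * t).a = s.a * t.a := rfl
@[simp] lemma mul_x (s t : Tri A X B) :
    (s * t).x = lAct A B X s.a t.x + rAct A B X t.b s.x := rfl
@[simp] lemma mul_b (s t : Tri A X B) : (s * t).b = s.b * t.b := rfl

private lemma lAct_mul (a a' : A) (x : X) :
    lAct A B X (a * a') x = lAct A B X a (lAct A B X a' x) :=
  BanachBimodule.lsmul_mul (A := A) (B := B) (X := X) a a' x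
private lemma rAct_mul (b b' : B) (x : X) :
    rAct A B X (b * b') x = rAct A B X b' (rAct A B X b x) :=
  BanachBimodule.rsmul_mul (A := A) (B := B) (X := X) b b' x
private lemma lAct_rAct (a : A) (b : B) (x : X) :
    lAct A B X a (rAct A B X b x) = rAct A B X b (lAct A B X a x) :=
  BanachBimodule.lsmul_rsmul (A := A) (B := B) (X := X) a b x

instance : NonUnitalRing (Tri A X B) where
  left_distrib s t u := by
    ext <;> simp [mul_add, map_add] <;> try abel
  right_distrib s t u := by
    ext <;> simp [add_mul, map_add, ContinuousLinearMap.add_apply] <;> try abel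
  zero_mul t := by ext <;> simp
  mul_zero t := by ext <;> simp
  mul_assoc s t u := by
    ext
    · simp [mul_assoc]
    · simp only [mul_x, mul_a, mul_b, map_add, ContinuousLinearMap.add_apply,
        lAct_mul, rAct_mul, lAct_rAct]
      abel
    · simp [mul_assoc]

noncomputable instance : NonUnitalNormedRing (Tri A X B) :=
  { (inferInstance : NormedAddCommGroup (Tri A X B)),
    (inferInstance : NonUnitalRing (Tri A X B)) with
    norm_mul_le := fun s t => by
      rw [norm_def, norm_def, norm_def]
      simp only [mul_a, mul_x, mul_b]
      have h1 := norm_mul_le s.a t.a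
      have h2 := norm_mul_le s.b t.b
      have h3 := norm_add_le (lAct A B X s.a t.x) (rAct A B X t.b s.x)
      have h4 : ‖lAct A B X s.a t.x‖ ≤ ‖s.a‖ * ‖t.x‖ :=
        BanachBimodule.norm_lsmul_le (A := A) (B := B) (X := X) s.a t.x
      have h5 : ‖rAct A B X t.b s.x‖ ≤ ‖t.b‖ * ‖s.x‖ :=
        BanachBimodule.norm_rsmul_le (A := A) (B := B) (X := X) t.b s.x
      have n1 := norm_nonneg s.a; have n2 := norm_nonneg s.x; have n3 := norm_nonneg s.b
      have n4 := norm_nonneg t.a; have n5 := norm_nonneg t.x; have n6 := norm_nonneg t.b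
      nlinarith }

instance : IsScalarTower ℂ (Tri A X B) (Tri A X B) :=
  ⟨fun c s t => by
    show (c • s) * t = c • (s * t)
    ext
    · simp [smul_mul_assoc]
    · simp [map_smul, smul_add]
    · simp [smul_mul_assoc]⟩

instance : SMulCommClass ℂ (Tri A X B) (Tri A X B) :=
  ⟨fun c s t => by
    show c • (s * t) = s * (c • t)
    ext
    · simp [mul_smul_comm]
    · simp [map_smul, smul_add]
    · simp [mul_smul_comm]⟩

end Mul

/-- The projection `Tri(A,X,B) → B` as a continuous linear map. -/
noncomputable def projB : Tri A X B →L[ℂ] B :=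
  LinearMap.mkContinuous
    { toFun := fun t => t.b
      map_add' := fun _ _ => rfl
      map_smul' := fun _ _ => rfl } 1
    (fun t => by
      show ‖t.b‖ ≤ 1 * ‖t‖
      rw [one_mul, norm_def]
      have := norm_nonneg t.a; have := norm_nonneg t.x
      linarith)

@[simp] lemma projB_apply (t : Tri A X B) : projB t = t.b := rfl

end Tri

/-- The character `ψ_φ` on `Tri(A,X,B)` induced by a character `φ` on `B`:
`ψ_φ [[a,x],[0,b]] = φ b`. -/
noncomputable def triCharacter {A B X : Type*}
    [NonUnitalNormedRing A] [NormedSpace ℂ A] [IsScalarTower ℂ A A] [SMulCommClass ℂ A A]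
    [NonUnitalNormedRing B] [NormedSpace ℂ B] [IsScalarTower ℂ B B] [SMulCommClass ℂ B B]
    [NormedAddCommGroup X] [NormedSpace ℂ X]
    (φ : B →L[ℂ] ℂ) : Tri A X B →L[ℂ] ℂ :=
  φ.comp Tri.projB

end ApproxBiflat
namespace ApproxBiflat

open Filter
open scoped Topology

/-- The closed ideal `I = Tri(0, X, B)` of `Tri(A, X, B)`, realized as the triangular algebra
`Tri(0, X, B)` over the zero Banach algebra `0 = PUnit`, where `X` carries the zero left
`0`-action and the given right `B`-action. -/
noncomputable def idealBimodule (A B X : Type*)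
    [NonUnitalNormedRing A] [NormedSpace ℂ A]
    [NonUnitalNormedRing B] [NormedSpace ℂ B]
    [NormedAddCommGroup X] [NormedSpace ℂ X] [BanachBimodule A B X] :
    BanachBimodule PUnit B X where
  lsmul := 0
  rsmul := BanachBimodule.rsmul A
  lsmul_mul := by intros; simp
  rsmul_mul := by
    intro b b' x
    exact BanachBimodule.rsmul_mul (A := A) (B := B) (X := X) b b' x
  lsmul_rsmul := by intros; simp
  norm_lsmul_le := by intro a x; simp
  norm_rsmul_le := by
    intro b x
    exact BanachBimodule.norm_rsmul_le (A := A) (B := B) (X := X) b x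

/-! A left `ψ`-mean `m ∈ I**` (`t · m = ψ(t) m`, `m ψ = 1`) is approximated, on any finite set
`F ⊆ I`, by elements `u` of the ball of radius `‖m‖ + 1`: otherwise Hahn–Banach would separate
`((0)_{t ∈ F}, 1)` from the image of that ball under `u ↦ ((t u - ψ(t) u)_{t ∈ F}, ψ u)`, and
evaluating `m` on the separating functional gives a contradiction. Rescaling to `ψ u = 1` yields
a bounded net in `I = Tri(0, X, B)` with `t u - ψ(t) u → 0`; for `t = [[0, x], [0, b]]` the
`X`- and `B`-entries of `t u - ψ(t) u` are `x · u_B - φ(b) u_X` and `b u_B - φ(b) u_B`. -/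

section WeakStarApproximation

open Metric

variable {E G : Type*} [NormedAddCommGroup E] [NormedSpace ℂ E]
  [NormedAddCommGroup G] [NormedSpace ℂ G]

lemma norm_le_of_re_lt_on_closedBall {R s : ℝ} (hR : 0 < R) (f : E →L[ℂ] ℂ)
    (h : ∀ u ∈ closedBall (0 : E) R, RCLike.re (f u) < s) : ‖f‖ ≤ s / R := by
  refine f.opNorm_bound_of_ball_bound hR s fun u hu => ?_
  obtain ⟨c, hc, hfu⟩ := RCLike.exists_norm_eq_mul_self (f u)
  have hcu : c • u ∈ closedBall (0 : E) R := by
    simpa only [mem_closedBall_zero_iff, norm_smul, hc, one_mul] using hu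
  have := h _ hcu
  rw [map_smul, smul_eq_mul, ← hfu, RCLike.ofReal_re] at this
  exact this.le

/-- The Hahn–Banach half of Goldstine's theorem, pushed forward along `L`. -/
lemma mem_closure_image_closedBall_of_bidual (L : E →L[ℂ] G) (Φ : (E →L[ℂ] ℂ) →L[ℂ] ℂ) (y : G)
    (hΦ : ∀ g : G →L[ℂ] ℂ, Φ (g.comp L) = g y) {R : ℝ} (hR : 0 < R) (hΦR : ‖Φ‖ ≤ R) :
    y ∈ closure (L '' closedBall 0 R) := by
  by_contra hy
  have hconv : Convex ℝ (closure (L '' closedBall (0 : E) R)) :=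
    ((convex_closedBall 0 R).linear_image (L.restrictScalars ℝ).toLinearMap).closure
  obtain ⟨g, s, hgs, hsy⟩ :=
    RCLike.geometric_hahn_banach_closed_point (𝕜 := ℂ) hconv isClosed_closure hy
  have hg : ∀ u ∈ closedBall (0 : E) R, RCLike.re (g (L u)) < s :=
    fun u hu => hgs _ (subset_closure ⟨u, hu, rfl⟩)
  have hs : 0 < s := by simpa using hg 0 (mem_closedBall_self hR.le)
  have hgL : ‖g.comp L‖ ≤ s / R := norm_le_of_re_lt_on_closedBall hR _ hg
  have : RCLike.re (g y) ≤ s :=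
    calc RCLike.re (g y) ≤ ‖g y‖ := RCLike.re_le_norm _
      _ = ‖Φ (g.comp L)‖ := by rw [hΦ]
      _ ≤ ‖Φ‖ * ‖g.comp L‖ := Φ.le_opNorm _
      _ ≤ R * (s / R) := mul_le_mul hΦR hgL (norm_nonneg _) hR.le
      _ = s := mul_div_cancel₀ _ hR.ne'
  linarith

end WeakStarApproximation

section LeftCharacterAmenable

variable {I : Type*} [NonUnitalNormedRing I] [NormedSpace ℂ I]
  [IsScalarTower ℂ I I] [SMulCommClass ℂ I I]

def charDefect (ψ : I →L[ℂ] ℂ) (F : Finset I) : I →L[ℂ] (F → I) × ℂ :=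
  (ContinuousLinearMap.pi fun t : F =>
    ContinuousLinearMap.mul ℂ I t - ψ t • ContinuousLinearMap.id ℂ I).prod ψ

@[simp] lemma charDefect_apply (ψ : I →L[ℂ] ℂ) (F : Finset I) (u : I) :
    charDefect ψ F u = (fun t : F => (t : I) * u - ψ t • u, ψ u) := rfl

variable {ψ : I →L[ℂ] ℂ} {m : Bidual I}

lemma bidual_comp_mul_sub_smul_eq_zero (hm : ∀ t : I, m.comp (dualRight t) = ψ t • m)
    (t : I) (h : Dual' I) :
    m (h.comp (ContinuousLinearMap.mul ℂ I t - ψ t • ContinuousLinearMap.id ℂ I)) = 0 := by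
  have hh : h.comp (ContinuousLinearMap.mul ℂ I t - ψ t • ContinuousLinearMap.id ℂ I) =
      dualRight t h - ψ t • h := by
    ext u
    simp
  have hmt : m (dualRight t h) = ψ t * m h := DFunLike.congr_fun (hm t) h
  rw [hh, map_sub, map_smul, hmt, smul_eq_mul, sub_self]

lemma bidual_comp_charDefect (hm : ∀ t : I, m.comp (dualRight t) = ψ t • m) (hm1 : m ψ = 1)
    (F : Finset I) (g : (F → I) × ℂ →L[ℂ] ℂ) : m (g.comp (charDefect ψ F)) = g (0, 1) := by
  classical
  have hdecomp : g.comp (charDefect ψ F) =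
      ∑ t : F, ((g.comp (inl ℂ _ ℂ)).comp (single ℂ (fun _ : F => I) t)).comp
        (ContinuousLinearMap.mul ℂ I t - ψ t • ContinuousLinearMap.id ℂ I) + g (0, 1) • ψ := by
    ext u
    rw [comp_apply, ← g.comp_inl_add_comp_inr, ← (g.comp (inl ℂ _ ℂ)).sum_comp_single,
      add_apply, sum_apply, smul_apply]
    congr 1
    have hpair : ((0 : F → I), ψ u) = ψ u • (0, 1) := by simp
    show g (0, ψ u) = g (0, 1) • ψ u
    rw [hpair, map_smul, smul_eq_mul, smul_eq_mul, mul_comm]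
  rw [hdecomp, map_add, map_sum, map_smul, hm1, smul_eq_mul, mul_one]
  simp only [bidual_comp_mul_sub_smul_eq_zero hm, Finset.sum_const_zero, zero_add]

lemma exists_almost_invariant_of_bidual (hm : ∀ t : I, m.comp (dualRight t) = ψ t • m)
    (hm1 : m ψ = 1) (F : Finset I) {ε : ℝ} (hε : 0 < ε) :
    ∃ u : I, ‖u‖ ≤ ‖m‖ + 1 ∧ ‖ψ u - 1‖ < ε ∧ ∀ t ∈ F, ‖t * u - ψ t • u‖ < ε := by
  have hmem := mem_closure_image_closedBall_of_bidual (charDefect ψ F) m (0, 1)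
    (bidual_comp_charDefect hm hm1 F) (by positivity) (le_add_of_nonneg_right zero_le_one)
  obtain ⟨_, ⟨u, hu, rfl⟩, hdist⟩ := Metric.mem_closure_iff.1 hmem ε hε
  rw [Prod.dist_eq, max_lt_iff, charDefect_apply] at hdist
  refine ⟨u, mem_closedBall_zero_iff.1 hu, ?_, fun t ht => ?_⟩
  · rw [← dist_eq_norm, dist_comm]
    exact hdist.2
  · have := dist_le_pi_dist (0 : F → I) (fun t : F => (t : I) * u - ψ t • u) ⟨t, ht⟩
    rw [Pi.zero_apply, dist_zero_left] at this
    exact this.trans_lt hdist.1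

lemma exists_normalized_almost_invariant_of_bidual
    (hm : ∀ t : I, m.comp (dualRight t) = ψ t • m) (hm1 : m ψ = 1)
    (F : Finset I) {ε : ℝ} (hε : 0 < ε) :
    ∃ u : I, ‖u‖ ≤ 2 * (‖m‖ + 1) ∧ ψ u = 1 ∧ ∀ t ∈ F, ‖t * u - ψ t • u‖ ≤ ε := by
  obtain ⟨u, hu, hψu, hF⟩ :=
    exists_almost_invariant_of_bidual hm hm1 F (lt_min (half_pos hε) one_half_pos)
  have hψu_ge : 2⁻¹ ≤ ‖ψ u‖ := by
    have := norm_sub_norm_le (1 : ℂ) (ψ u)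
    rw [norm_sub_rev, norm_one] at this
    linarith [min_le_right (ε / 2) (1 / 2), (one_div 2 : (1 : ℝ) / 2 = 2⁻¹)]
  have hψu_ne : ψ u ≠ 0 := norm_pos_iff.1 (lt_of_lt_of_le (by norm_num) hψu_ge)
  have hinv : ‖(ψ u)⁻¹‖ ≤ 2 := by
    rw [norm_inv]
    exact inv_le_of_inv_le₀ two_pos hψu_ge
  refine ⟨(ψ u)⁻¹ • u, ?_, by rw [map_smul, smul_eq_mul, inv_mul_cancel₀ hψu_ne], fun t ht => ?_⟩
  · rw [norm_smul]
    exact mul_le_mul hinv hu (norm_nonneg _) zero_le_two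
  · rw [mul_smul_comm, smul_comm, ← smul_sub, norm_smul]
    calc ‖(ψ u)⁻¹‖ * ‖t * u - ψ t • u‖ ≤ 2 * (ε / 2) :=
          mul_le_mul hinv ((hF t ht).le.trans (min_le_left _ _)) (norm_nonneg _) zero_le_two
      _ = ε := mul_div_cancel₀ _ two_ne_zero

theorem LeftPhiAmenable.exists_bounded_approx_net (h : LeftPhiAmenable ψ) :
    ∃ (l : Filter I) (C : ℝ), l.NeBot ∧ (∀ᶠ u in l, ‖u‖ ≤ C ∧ ψ u = 1) ∧
      ∀ t : I, Tendsto (fun u => t * u - ψ t • u) l (𝓝 0) := by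
  classical
  obtain ⟨m, hm, hm1⟩ := h
  choose u hu using fun p : Finset I × ℕ =>
    exists_normalized_almost_invariant_of_bidual hm hm1 p.1 (Nat.one_div_pos_of_nat (n := p.2))
  refine ⟨atTop.map u, 2 * (‖m‖ + 1), inferInstance,
    eventually_map.2 (Eventually.of_forall fun p => ⟨(hu p).1, (hu p).2.1⟩), fun t => ?_⟩
  have hsnd : Tendsto (Prod.snd : Finset I × ℕ → ℕ) atTop atTop := by
    rw [← prod_atTop_atTop_eq]
    exact tendsto_snd
  rw [tendsto_map'_iff]
  refine squeeze_zero_norm' ?_ (tendsto_one_div_add_atTop_nhds_zero_nat.comp hsnd)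
  filter_upwards [eventually_ge_atTop ({t}, 0)] with p hp
  exact (hu p).2.2 t (Finset.singleton_subset_iff.1 hp.1)

end LeftCharacterAmenable

namespace Tri

variable {A B X : Type*}
  [NonUnitalNormedRing A] [NormedSpace ℂ A] [IsScalarTower ℂ A A] [SMulCommClass ℂ A A]
  [NonUnitalNormedRing B] [NormedSpace ℂ B] [IsScalarTower ℂ B B] [SMulCommClass ℂ B B]
  [NormedAddCommGroup X] [NormedSpace ℂ X]

@[simp] lemma sub_x (s t : Tri A X B) : (s - t).x = s.x - t.x := by
  rw [sub_eq_add_neg, add_x, neg_x, ← sub_eq_add_neg]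

@[simp] lemma sub_b (s t : Tri A X B) : (s - t).b = s.b - t.b := by
  rw [sub_eq_add_neg, add_b, neg_b, ← sub_eq_add_neg]

lemma norm_x_le (t : Tri A X B) : ‖t.x‖ ≤ ‖t‖ := by
  rw [norm_def]
  linarith [norm_nonneg t.a, norm_nonneg t.b]

lemma norm_b_le (t : Tri A X B) : ‖t.b‖ ≤ ‖t‖ := by
  rw [norm_def]
  linarith [norm_nonneg t.a, norm_nonneg t.x]

def projX : Tri A X B →L[ℂ] X :=
  LinearMap.mkContinuous
    { toFun := fun t => t.x
      map_add' := fun _ _ => rfl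
      map_smul' := fun _ _ => rfl } 1
    fun t => (norm_x_le t).trans_eq (one_mul _).symm

@[simp] lemma projX_apply (t : Tri A X B) : projX t = t.x := rfl

variable [BanachBimodule A B X] {φ : B →L[ℂ] ℂ} {l : Filter (Tri A X B)}

lemma tendsto_rAct_sub_smul_x
    (h : ∀ t : Tri A X B, Tendsto (fun u => t * u - triCharacter φ t • u) l (𝓝 0))
    (x : X) (b : B) : Tendsto (fun u : Tri A X B => rAct A B X u.b x - φ b • u.x) l (𝓝 0) := by
  simpa [Function.comp_def, triCharacter] using
    (projX.continuous.tendsto' 0 0 (map_zero _)).comp (h ⟨0, x, b⟩)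

lemma tendsto_mul_sub_smul_b
    (h : ∀ t : Tri A X B, Tendsto (fun u => t * u - triCharacter φ t • u) l (𝓝 0))
    (b : B) : Tendsto (fun u : Tri A X B => b * u.b - φ b • u.b) l (𝓝 0) := by
  simpa [Function.comp_def, triCharacter] using
    (projB.continuous.tendsto' 0 0 (map_zero _)).comp (h ⟨0, 0, b⟩)

end Tri

theorem statement16_general (A B X : Type*)
    [NonUnitalNormedRing A] [NormedSpace ℂ A]
    [NonUnitalNormedRing B] [NormedSpace ℂ B] [IsScalarTower ℂ B B] [SMulCommClass ℂ B B]
    [NormedAddCommGroup X] [NormedSpace ℂ X]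
    [BanachBimodule A B X]
    (φ : B →L[ℂ] ℂ)
    (hamen :
      letI : BanachBimodule PUnit B X := idealBimodule A B X
      LeftPhiAmenable (triCharacter (A := PUnit) (X := X) φ)) :
    ∃ l : Filter (X × B), l.NeBot ∧
      (∃ C : ℝ, ∀ᶠ p in l, ‖p.1‖ ≤ C ∧ ‖p.2‖ ≤ C) ∧
      (∀ᶠ p in l, φ p.2 = 1) ∧
      (∀ (x : X) (b : B),
        Tendsto (fun p : X × B => rAct A B X p.2 x - φ b • p.1) l (𝓝 0)) ∧
      (∀ b : B, Tendsto (fun p : X × B => b * p.2 - φ b • p.2) l (𝓝 0)) := by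
  let : BanachBimodule PUnit B X := idealBimodule A B X
  obtain ⟨l, C, hl, hbound, happrox⟩ := hamen.exists_bounded_approx_net
  refine ⟨l.map fun u => (u.x, u.b), map_neBot, ⟨C, ?_⟩, ?_, fun x b => ?_, fun b => ?_⟩
  · exact eventually_map.2 <| hbound.mono fun u hu =>
      ⟨(Tri.norm_x_le u).trans hu.1, (Tri.norm_b_le u).trans hu.1⟩
  · exact eventually_map.2 <| hbound.mono fun u hu => hu.2
  · exact tendsto_map'_iff.2 (Tri.tendsto_rAct_sub_smul_x happrox x b)
  · exact tendsto_map'_iff.2 (Tri.tendsto_mul_sub_smul_b happrox b)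

/-- Let `A, B` be Banach algebras, `X` a Banach `A,B`-module, `φ ∈ Δ(B)`,
and `ψ_φ ∈ Δ(Tri(A,X,B))` the character `ψ_φ [[a,x],[0,b]] = φ(b)`.  If the closed ideal
`I = Tri(0,X,B)` of `T = Tri(A,X,B)` is left `ψ_φ|_I`-amenable, then there are a bounded net
`(x_α)` in `X` and a bounded net `(b_α)` in `B` with `φ(b_α) = 1`,
`x · b_α - φ(b) · x_α → 0` and `b · b_α - φ(b) · b_α → 0` for all `x ∈ X` and `b ∈ B`. -/
theorem statement16 (A B X : Type*)
    [NonUnitalNormedRing A] [NormedSpace ℂ A] [IsScalarTower ℂ A A] [SMulCommClass ℂ A A]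
    [CompleteSpace A]
    [NonUnitalNormedRing B] [NormedSpace ℂ B] [IsScalarTower ℂ B B] [SMulCommClass ℂ B B]
    [CompleteSpace B]
    [NormedAddCommGroup X] [NormedSpace ℂ X] [CompleteSpace X]
    [BanachBimodule A B X]
    (φ : B →L[ℂ] ℂ) (hφ : IsCharacter φ)
    (hamen :
      letI : BanachBimodule PUnit B X := idealBimodule A B X
      LeftPhiAmenable (triCharacter (A := PUnit) (X := X) φ)) :
    ∃ l : Filter (X × B), l.NeBot ∧
      (∃ C : ℝ, ∀ᶠ p in l, ‖p.1‖ ≤ C ∧ ‖p.2‖ ≤ C) ∧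
      (∀ᶠ p in l, φ p.2 = 1) ∧
      (∀ (x : X) (b : B),
        Tendsto (fun p : X × B => rAct A B X p.2 x - φ b • p.1) l (𝓝 0)) ∧
      (∀ b : B, Tendsto (fun p : X × B => b * p.2 - φ b • p.2) l (𝓝 0)) :=
  statement16_general A B X φ hamen

end ApproxBiflat
end
end
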